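/- arXiv:2503.04124 — 4 statements merged into one kernel-verified Lean document; each statement's English description precedes it below -/
import Mathlib

section
/- Let G be a connected triangle-free simple graph on n vertices with n ≥ 4. Then the hop domination number of G satisfies γ_h(G) ≤ n/2 (equivalently, 2·γ_h(G) ≤ n). -/
/-- A set `S` of vertices is a hop dominating set of `G` if every vertex not in `S`
is at distance exactly 2 from some vertex of `S`. -/
def SimpleGraph.IsHopDominatingSet {V : Type*} (G : SimpleGraph V) (S : Finset V) : Prop :=
  ∀ v : V, v ∉ S → ∃ u ∈ S, G.dist u v = 2

/-- The hop domination number of `G`: the minimum cardinality of a hop dominating set. -/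
noncomputable def SimpleGraph.hopDominationNumber {V : Type*} [Fintype V]
    (G : SimpleGraph V) : ℕ :=
  sInf {k : ℕ | ∃ S : Finset V, G.IsHopDominatingSet S ∧ S.card = k}

/-!
If some vertex `v` is adjacent to all others, triangle-freeness makes the other vertices pairwise
non-adjacent, so `{v, u}` is hop dominating for any `u ≠ v`. Otherwise connectivity gives every
vertex a vertex at distance exactly 2. Then a minimum hop dominating set `S` has a hop neighbour
outside `S` for each of its vertices (else that vertex could be removed from `S`), so `Sᶜ` is hop
dominating too, and `γ_h ≤ min (#S) (#Sᶜ) ≤ n / 2`, as in Ore's bound for ordinary domination.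
-/

namespace SimpleGraph

variable {V : Type*} {G : SimpleGraph V}

lemma Reachable.exists_dist_eq_of_le {v w : V} (h : G.Reachable v w) {k : ℕ}
    (hk : k ≤ G.dist v w) : ∃ u, G.dist v u = k := by
  obtain ⟨p, hp⟩ := h.exists_walk_length_eq_dist
  refine ⟨p.getVert k, ?_⟩
  rw [← length_eq_dist_of_subwalk hp (p.isSubwalk_take k), Walk.take_length]
  omega

lemma dist_eq_two_of_adj_of_adj {u v w : V} (huv : G.Adj u v) (hvw : G.Adj v w) (hne : u ≠ w)
    (hnadj : ¬G.Adj u w) : G.dist u w = 2 :=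
  le_antisymm (by simpa using G.dist_le (huv.toWalk.concat hvw))
    ((huv.reachable.trans hvw.reachable).one_lt_dist_of_ne_of_not_adj hne hnadj)

lemma isHopDominatingSet_pair_of_forall_adj [DecidableEq V] (htf : G.CliqueFree 3) {u v : V}
    (hv : ∀ w, w ≠ v → G.Adj v w) (hu : u ≠ v) : G.IsHopDominatingSet {v, u} := by
  intro w hw
  simp only [Finset.mem_insert, Finset.mem_singleton, not_or] at hw
  have hnadj : ¬G.Adj u w := fun huw ↦
    htf {v, u, w} (is3Clique_triple_iff.2 ⟨hv u hu, hv w hw.1, huw⟩)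
  exact ⟨u, by simp, dist_eq_two_of_adj_of_adj (hv u hu).symm (hv w hw.1) (Ne.symm hw.2) hnadj⟩

lemma IsHopDominatingSet.compl_of_minimal [Fintype V] [DecidableEq V] {S : Finset V}
    (hdist : ∀ v, ∃ u, G.dist u v = 2) (hS : G.IsHopDominatingSet S)
    (hmin : ∀ v ∈ S, ¬G.IsHopDominatingSet (S.erase v)) : G.IsHopDominatingSet Sᶜ := by
  intro v hv
  rw [Finset.notMem_compl] at hv
  by_contra hv'
  have hin : ∀ u, G.dist u v = 2 → u ∈ S := fun u hu ↦ by
    by_contra huS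
    exact hv' ⟨u, Finset.mem_compl.2 huS, hu⟩
  refine hmin v hv fun w hw ↦ ?_
  by_cases hwv : w = v
  · subst hwv
    obtain ⟨u, hu⟩ := hdist w
    have hne : u ≠ w := by rintro rfl; simp at hu
    exact ⟨u, Finset.mem_erase.2 ⟨hne, hin u hu⟩, hu⟩
  · obtain ⟨u, huS, hu⟩ := hS w fun h ↦ hw (Finset.mem_erase.2 ⟨hwv, h⟩)
    have hne : u ≠ v := by
      rintro rfl
      exact hw (Finset.mem_erase.2 ⟨hwv, hin w (dist_comm.trans hu)⟩)
    exact ⟨u, Finset.mem_erase.2 ⟨hne, huS⟩, hu⟩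

section hopDominationNumber

variable [Fintype V]

lemma hopDominationNumber_le {S : Finset V} (hS : G.IsHopDominatingSet S) :
    G.hopDominationNumber ≤ S.card :=
  Nat.sInf_le ⟨S, hS, rfl⟩

lemma exists_isHopDominatingSet_card_eq_hopDominationNumber :
    ∃ S : Finset V, G.IsHopDominatingSet S ∧ S.card = G.hopDominationNumber :=
  Nat.sInf_mem (s := {k | ∃ S : Finset V, G.IsHopDominatingSet S ∧ S.card = k})
    ⟨_, Finset.univ, fun v hv ↦ absurd (Finset.mem_univ v) hv, rfl⟩

lemma hopDominationNumber_le_two_of_forall_adj (htf : G.CliqueFree 3) {v : V}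
    (hv : ∀ w, w ≠ v → G.Adj v w) (hV : 1 < Fintype.card V) : G.hopDominationNumber ≤ 2 := by
  classical
  obtain ⟨u, hu⟩ := Fintype.exists_ne_of_one_lt_card hV v
  calc G.hopDominationNumber ≤ ({v, u} : Finset V).card :=
        hopDominationNumber_le (isHopDominatingSet_pair_of_forall_adj htf hv hu)
    _ ≤ 2 := Finset.card_le_two

lemma two_mul_hopDominationNumber_le_card (hdist : ∀ v, ∃ u, G.dist u v = 2) :
    2 * G.hopDominationNumber ≤ Fintype.card V := by
  classical
  obtain ⟨S, hS, hcard⟩ := G.exists_isHopDominatingSet_card_eq_hopDominationNumber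
  have hmin : ∀ v ∈ S, ¬G.IsHopDominatingSet (S.erase v) := fun v hv h ↦
    (Finset.card_erase_lt_of_mem hv).not_ge (hcard ▸ hopDominationNumber_le h)
  have hcompl := hopDominationNumber_le (hS.compl_of_minimal hdist hmin)
  rw [Finset.card_compl] at hcompl
  have := S.card_le_univ
  omega

end hopDominationNumber

end SimpleGraph

open SimpleGraph in
theorem hop_domination_le_half {V : Type*} [Fintype V] (G : SimpleGraph V)
    (hconn : G.Connected) (htf : G.CliqueFree 3) (hn : 4 ≤ Fintype.card V) :
    2 * G.hopDominationNumber ≤ Fintype.card V := by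
  by_cases hstar : ∃ v : V, ∀ w, w ≠ v → G.Adj v w
  · obtain ⟨v, hv⟩ := hstar
    have := hopDominationNumber_le_two_of_forall_adj htf hv (by omega)
    omega
  · push Not at hstar
    refine two_mul_hopDominationNumber_le_card fun v ↦ ?_
    obtain ⟨w, hne, hnadj⟩ := hstar v
    obtain ⟨u, hu⟩ := (hconn v w).exists_dist_eq_of_le
      (hconn.one_lt_dist_of_ne_of_not_adj (Ne.symm hne) hnadj)
    exact ⟨u, dist_comm.trans hu⟩
end

section
/- For every integer n ≥ 1, the hop domination number of the path on n vertices satisfies γ_h(P_n) = ⌈⌊n/2⌋/3⌉ + ⌈⌈n/2⌉/3⌉. -/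
/-!
Distance 2 in `P_n` preserves parity, so a hop dominating set of `P_n` is the same as a pair of
ordinary dominating sets of the paths formed by the `⌈n/2⌉` even and the `⌊n/2⌋` odd vertices,
on which "distance 2" becomes adjacency. A vertex of a path dominates at most three vertices,
so `P_m` needs at least `⌈m/3⌉` of them, and the vertices `1, 4, 7, …` (the last one clipped to
`m - 1`) attain this bound.
-/

open SimpleGraph Finset

namespace SimpleGraph

theorem hopDominationNumber_eq_of_forall_le {V : Type*} [Fintype V] {G : SimpleGraph V} {k : ℕ}
    (hex : ∃ S, G.IsHopDominatingSet S ∧ #S = k) (hle : ∀ S, G.IsHopDominatingSet S → k ≤ #S) :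
    G.hopDominationNumber = k :=
  le_antisymm (Nat.sInf_le hex) (le_csInf ⟨k, hex⟩ fun _ ⟨S, hS, hcard⟩ => hcard ▸ hle S hS)

theorem pathGraph_natDist_le_length {n : ℕ} {u v : Fin n} (p : (pathGraph n).Walk u v) :
    Nat.dist u v ≤ p.length := by
  induction p with
  | nil => simp
  | @cons a b c hab p ih =>
    have hab' : Nat.dist a b = 1 := by
      rcases pathGraph_adj.1 hab with h | h <;> simp only [Nat.dist] <;> omega
    calc Nat.dist a c ≤ Nat.dist a b + Nat.dist b c := Nat.dist.triangle_inequality _ _ _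
      _ ≤ (Walk.cons hab p).length := by rw [Walk.length_cons, hab']; omega

theorem pathGraph_exists_walk_length_eq_sub {n : ℕ} {u v : Fin n} (huv : u ≤ v) :
    ∃ p : (pathGraph n).Walk u v, p.length = v - u := by
  obtain ⟨k, hk⟩ := Nat.exists_eq_add_of_le (Fin.le_def.1 huv)
  induction k generalizing v with
  | zero => exact ⟨Walk.nil.copy rfl (Fin.ext hk.symm), by simp [hk]⟩
  | succ k ih =>
    let w : Fin n := ⟨u + k, by omega⟩
    obtain ⟨p, hp⟩ := ih (v := w) (Fin.le_def.2 (by simp [w])) rfl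
    have hwv : (pathGraph n).Adj w v := pathGraph_adj.2 (Or.inl (by simp [w]; omega))
    exact ⟨p.concat hwv, by simp only [Walk.length_concat, hp, w]; omega⟩

theorem pathGraph_dist {n : ℕ} (u v : Fin n) : (pathGraph n).dist u v = Nat.dist u v := by
  refine le_antisymm ?_ ?_
  · rcases le_total u v with huv | hvu
    · obtain ⟨p, hp⟩ := pathGraph_exists_walk_length_eq_sub huv
      exact (dist_le p).trans (by simp only [hp, Nat.dist]; omega)
    · obtain ⟨p, hp⟩ := pathGraph_exists_walk_length_eq_sub hvu
      rw [dist_comm]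
      exact (dist_le p).trans (by simp only [hp, Nat.dist]; omega)
  · obtain ⟨p, hp⟩ := (pathGraph_preconnected n u v).exists_walk_length_eq_dist
    exact hp ▸ pathGraph_natDist_le_length p

end SimpleGraph

/-- With `d = 1` this is ordinary domination of `P_n`, with `d = 2` hop domination. -/
def StepDominates (d n : ℕ) (T : Finset ℕ) : Prop :=
  ∀ v < n, v ∉ T → ∃ u ∈ T, Nat.dist u v = d

theorem isHopDominatingSet_pathGraph_iff {n : ℕ} {S : Finset (Fin n)} :
    (pathGraph n).IsHopDominatingSet S ↔ StepDominates 2 n (S.map Fin.valEmbedding) := by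
  simp only [IsHopDominatingSet, StepDominates, pathGraph_dist, mem_map, Fin.valEmbedding_apply]
  constructor
  · rintro h v hv hvS
    obtain ⟨u, hu, huv⟩ := h ⟨v, hv⟩ fun h' => hvS ⟨_, h', rfl⟩
    exact ⟨u, ⟨u, hu, rfl⟩, huv⟩
  · rintro h v hvS
    obtain ⟨_, ⟨u, hu, rfl⟩, huv⟩ := h v v.isLt fun ⟨w, hw, hwv⟩ => hvS (Fin.ext hwv ▸ hw)
    exact ⟨u, hu, huv⟩

theorem StepDominates.le_three_mul_card {m : ℕ} {D : Finset ℕ} (h : StepDominates 1 m D) :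
    m ≤ 3 * #D := by
  have hcover : range m ⊆ D.biUnion fun i => Icc (i - 1) (i + 1) := by
    intro j hj
    rw [mem_range] at hj
    rw [mem_biUnion]
    by_cases hjD : j ∈ D
    · exact ⟨j, hjD, mem_Icc.2 (by omega)⟩
    · obtain ⟨i, hi, hij⟩ := h j hj hjD
      exact ⟨i, hi, mem_Icc.2 (by simp only [Nat.dist] at hij; omega)⟩
  calc m = #(range m) := (card_range m).symm
    _ ≤ #(D.biUnion fun i => Icc (i - 1) (i + 1)) := card_le_card hcover
    _ ≤ #D * 3 := card_biUnion_le_card_mul _ _ _ fun i _ => by simp only [Nat.card_Icc]; omega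
    _ = 3 * #D := mul_comm _ _

theorem exists_stepDominates_one (m : ℕ) :
    ∃ D ⊆ range m, StepDominates 1 m D ∧ #D = (m + 2) / 3 := by
  set centre : ℕ → ℕ := fun k => min (3 * k + 1) (m - 1)
  have hcentre : ∀ j < m, centre (j / 3) ∈ (range ((m + 2) / 3)).image centre :=
    fun j hj => mem_image_of_mem _ (mem_range.2 (by omega))
  refine ⟨(range ((m + 2) / 3)).image centre, ?_, ?_, ?_⟩
  · intro i hi
    obtain ⟨k, hk, rfl⟩ := mem_image.1 hi
    simp only [mem_range, centre] at hk ⊢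
    omega
  · intro j hj hjD
    have hne : centre (j / 3) ≠ j := fun h => hjD (h ▸ hcentre j hj)
    exact ⟨centre (j / 3), hcentre j hj, by simp only [Nat.dist, centre] at hne ⊢; omega⟩
  · rw [card_image_of_injOn, card_range]
    intro a ha b hb hab
    simp only [coe_range, Set.mem_Iio, centre] at ha hb hab
    omega

def parityHalf (T : Finset ℕ) (r : ℕ) : Finset ℕ :=
  (T.filter (· % 2 = r)).image (· / 2)

theorem card_parityHalf_add_card_parityHalf_le (T : Finset ℕ) :
    #(parityHalf T 0) + #(parityHalf T 1) ≤ #T := by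
  have hodd : T.filter (· % 2 = 1) = T.filter (¬ · % 2 = 0) :=
    filter_congr fun v _ => by omega
  calc #(parityHalf T 0) + #(parityHalf T 1)
      ≤ #(T.filter (· % 2 = 0)) + #(T.filter (· % 2 = 1)) :=
        add_le_add card_image_le card_image_le
    _ = #T := by rw [hodd, card_filter_add_card_filter_not]

theorem StepDominates.parityHalf {n : ℕ} {T : Finset ℕ} (h : StepDominates 2 n T) {r : ℕ}
    (hr : r < 2) : StepDominates 1 ((n + 1 - r) / 2) (parityHalf T r) := by
  intro j hj hjT
  have hvT : 2 * j + r ∉ T := fun hv =>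
    hjT (mem_image.2 ⟨2 * j + r, mem_filter.2 ⟨hv, by omega⟩, by omega⟩)
  obtain ⟨u, hu, huv⟩ := h (2 * j + r) (by omega) hvT
  simp only [Nat.dist] at huv
  exact ⟨u / 2, mem_image.2 ⟨u, mem_filter.2 ⟨hu, by omega⟩, rfl⟩, by simp only [Nat.dist]; omega⟩

def interleave (D₀ D₁ : Finset ℕ) : Finset ℕ :=
  D₀.image (2 * ·) ∪ D₁.image (2 * · + 1)

theorem card_interleave (D₀ D₁ : Finset ℕ) : #(interleave D₀ D₁) = #D₀ + #D₁ := by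
  rw [interleave, card_union_of_disjoint, card_image_of_injective, card_image_of_injective]
  · exact fun a b h => by omega
  · exact fun a b h => by omega
  · simp only [Finset.disjoint_left, mem_image, not_exists, not_and]
    rintro _ ⟨a, -, rfl⟩ b - h
    omega

theorem lt_of_mem_interleave {n : ℕ} {D₀ D₁ : Finset ℕ} (h₀ : D₀ ⊆ range ((n + 1) / 2))
    (h₁ : D₁ ⊆ range (n / 2)) : ∀ v ∈ interleave D₀ D₁, v < n := by
  simp only [interleave, mem_union, mem_image]
  rintro _ (⟨j, hj, rfl⟩ | ⟨j, hj, rfl⟩)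
  · have := mem_range.1 (h₀ hj); omega
  · have := mem_range.1 (h₁ hj); omega

theorem StepDominates.interleave {n : ℕ} {D₀ D₁ : Finset ℕ}
    (h₀ : StepDominates 1 ((n + 1) / 2) D₀) (h₁ : StepDominates 1 (n / 2) D₁) :
    StepDominates 2 n (interleave D₀ D₁) := by
  intro v hv hvD
  simp only [_root_.interleave, mem_union, mem_image, not_or, not_exists, not_and] at hvD ⊢
  rcases Nat.even_or_odd' v with ⟨j, rfl | rfl⟩
  · obtain ⟨i, hi, hij⟩ := h₀ j (by omega) fun hj => hvD.1 j hj rfl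
    exact ⟨2 * i, Or.inl ⟨i, hi, rfl⟩, by simp only [Nat.dist] at hij ⊢; omega⟩
  · obtain ⟨i, hi, hij⟩ := h₁ j (by omega) fun hj => hvD.2 j hj rfl
    exact ⟨2 * i + 1, Or.inr ⟨i, hi, rfl⟩, by simp only [Nat.dist] at hij ⊢; omega⟩

theorem hop_domination_path_general (n : ℕ) :
    (SimpleGraph.pathGraph n).hopDominationNumber =
      (n / 2 + 2) / 3 + ((n + 1) / 2 + 2) / 3 := by
  refine hopDominationNumber_eq_of_forall_le ?_ fun S hS => ?_
  · obtain ⟨D₀, hD₀n, hD₀, hcard₀⟩ := exists_stepDominates_one ((n + 1) / 2)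
    obtain ⟨D₁, hD₁n, hD₁, hcard₁⟩ := exists_stepDominates_one (n / 2)
    have hlt := lt_of_mem_interleave hD₀n hD₁n
    refine ⟨(interleave D₀ D₁).attachFin hlt, ?_, ?_⟩
    · rw [isHopDominatingSet_pathGraph_iff, map_valEmbedding_attachFin]
      exact hD₀.interleave hD₁
    · rw [card_attachFin, card_interleave]
      omega
  · have hT := isHopDominatingSet_pathGraph_iff.1 hS
    have h₀ := (hT.parityHalf (r := 0) (by norm_num)).le_three_mul_card
    have h₁ := (hT.parityHalf (r := 1) (by norm_num)).le_three_mul_card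
    have hsplit := card_parityHalf_add_card_parityHalf_le (S.map Fin.valEmbedding)
    rw [card_map] at hsplit
    omega

theorem hop_domination_path (n : ℕ) (hn : 1 ≤ n) :
    (SimpleGraph.pathGraph n).hopDominationNumber =
      (n / 2 + 2) / 3 + ((n + 1) / 2 + 2) / 3 :=
  hop_domination_path_general n
end

section
/- For every integer n ≥ 4 with n ≠ 8, the cycle C_n has a hop dominating set S containing two adjacent vertices such that |S| ≤ (2n+2)/5 (i.e., 5·|S| ≤ 2n+2). -/
/-!
In `C_n` the vertices at distance two from `v` are `v ± 2`. Take a hop dominating set containing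
the adjacent pair `0, 1` and insert, after the last vertex, a block of five vertices whose first
two join the set. The new pair takes over from `0, 1` for the two vertices just before it, the
next two new vertices lie two steps after the pair, and the last one two steps before `1`. Both
`5|S|` and `2n + 2` grow by `10`, so the claim passes from `n` to `n + 5`; the cases
`n = 4, 5, 6, 7, 13` are checked directly.
-/

open SimpleGraph Fin.CommRing

lemma cycleGraph_dist_add_two {n : ℕ} (v : Fin (n + 4)) :
    (cycleGraph (n + 4)).dist (v + 2) v = 2 := by
  have two_ne_zero : (2 : Fin (n + 4)) ≠ 0 := by simp [Fin.ext_iff, Nat.mod_eq_of_lt]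
  have two_ne_one : (2 : Fin (n + 4)) ≠ 1 := by simp [Fin.ext_iff, Nat.mod_eq_of_lt]
  have three_ne_zero : (3 : Fin (n + 4)) ≠ 0 := by simp [Fin.ext_iff, Nat.mod_eq_of_lt]
  have h : (cycleGraph (n + 4)).edist (v + 2) v = 2 := by
    refine edist_eq_two_iff.mpr ⟨?_, ?_, v + 1, ?_⟩
    · intro h; apply two_ne_zero; linear_combination h
    · rw [cycleGraph_adj]
      rintro (h | h)
      · apply two_ne_one; linear_combination h
      · apply three_ne_zero; linear_combination -h
    · rw [mem_commonNeighbors, cycleGraph_adj, cycleGraph_adj]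
      exact ⟨.inl (by ring), .inr (by ring)⟩
  rw [SimpleGraph.dist, h]; rfl

lemma isHopDominatingSet_cycleGraph {n : ℕ} {S : Finset (Fin (n + 4))}
    (h : ∀ v ∉ S, ∃ u ∈ S, u = v + 2 ∨ u + 2 = v) :
    (cycleGraph (n + 4)).IsHopDominatingSet S := by
  intro v hv
  obtain ⟨u, hu, rfl | rfl⟩ := h v hv
  · exact ⟨_, hu, cycleGraph_dist_add_two v⟩
  · exact ⟨u, hu, by rw [dist_comm]; exact cycleGraph_dist_add_two u⟩

/-- A hop dominating set of `C_n` containing `0` and `1`, as a set of naturals. Only `v < n - 2`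
needs a hop neighbour in `A`: `n - 2` and `n - 1` are two steps before `0` and `1` in `C_n`. -/
structure IsHopPattern (n : ℕ) (A : Finset ℕ) : Prop where
  subset_range : A ⊆ Finset.range n
  zero_mem : 0 ∈ A
  one_mem : 1 ∈ A
  hop : ∀ v < n - 2, v ∉ A → ∃ u ∈ A, u = v + 2 ∨ u + 2 = v

namespace IsHopPattern

variable {n : ℕ} {A : Finset ℕ}

lemma two_le (h : IsHopPattern n A) : 2 ≤ n :=
  Finset.mem_range.mp (h.subset_range h.one_mem)

lemma append (h : IsHopPattern n A) : IsHopPattern (n + 5) (insert n (insert (n + 1) A)) where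
  subset_range := by
    simp only [Finset.insert_subset_iff, Finset.mem_range]
    exact ⟨by omega, by omega, h.subset_range.trans (Finset.range_subset_range.mpr (by omega))⟩
  zero_mem := by simp [h.zero_mem]
  one_mem := by simp [h.one_mem]
  hop v hv hvA := by
    simp only [Finset.mem_insert, not_or] at hvA
    obtain ⟨hvn, hvn1, hvA⟩ := hvA
    by_cases hv' : v < n - 2
    · obtain ⟨u, hu, huv⟩ := h.hop v hv' hvA
      exact ⟨u, by simp [hu], huv⟩
    · have := h.two_le
      obtain rfl | rfl | rfl : v = n - 2 ∨ v = n - 1 ∨ v = n + 2 := by omega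
      · exact ⟨n, by simp, by omega⟩
      · exact ⟨n + 1, by simp, by omega⟩
      · exact ⟨n, by simp, by omega⟩

end IsHopPattern

theorem exists_isHopPattern (n : ℕ) (hn : 4 ≤ n) (hn8 : n ≠ 8) :
    ∃ A, IsHopPattern n A ∧ 5 * A.card ≤ 2 * n + 2 := by
  induction n using Nat.strong_induction_on with
  | _ n ih =>
    by_cases h13 : n = 13
    · subst h13
      exact ⟨{0, 1, 2, 7, 8}, ⟨by decide, by decide, by decide, by decide⟩, by decide⟩
    by_cases hsmall : n < 9
    · interval_cases n
      all_goals first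
        | exact absurd rfl hn8
        | exact ⟨{0, 1}, ⟨by decide, by decide, by decide, by decide⟩, by decide⟩
        | exact ⟨{0, 1, 2}, ⟨by decide, by decide, by decide, by decide⟩, by decide⟩
    obtain ⟨m, rfl⟩ : ∃ m, n = m + 5 := ⟨n - 5, by omega⟩
    obtain ⟨A, hA, hcard⟩ := ih m (by omega) (by omega) (by omega)
    have hcard_append : (insert m (insert (m + 1) A)).card ≤ A.card + 2 :=
      (Finset.card_insert_le _ _).trans (Nat.succ_le_succ (Finset.card_insert_le _ _))
    exact ⟨_, hA.append, by omega⟩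

lemma IsHopPattern.isHopDominatingSet {n : ℕ} {A : Finset ℕ} (h : IsHopPattern (n + 4) A) :
    (cycleGraph (n + 4)).IsHopDominatingSet (A.image Nat.cast) := by
  refine isHopDominatingSet_cycleGraph fun v hv ↦ ?_
  have hvA : v.val ∉ A := fun hv' ↦ hv (Finset.mem_image.mpr ⟨v, hv', Fin.cast_val_eq_self v⟩)
  have add_two : ((v.val + 2 : ℕ) : Fin (n + 4)) = v + 2 := by simp
  by_cases hv' : v.val < n + 2
  · obtain ⟨u, hu, rfl | huv⟩ := h.hop v hv' hvA
    · exact ⟨_, Finset.mem_image_of_mem _ hu, .inl add_two⟩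
    · refine ⟨_, Finset.mem_image_of_mem _ hu, .inr ?_⟩
      rw [← Fin.cast_val_eq_self v, ← huv]
      simp
  · obtain hv | hv : v.val + 2 = n + 4 ∨ v.val + 2 = 1 + (n + 4) := by omega
    · refine ⟨_, Finset.mem_image_of_mem _ h.zero_mem, .inl ?_⟩
      rw [← add_two, hv]; simp
    · refine ⟨_, Finset.mem_image_of_mem _ h.one_mem, .inl ?_⟩
      rw [← add_two, hv]; simp

theorem hop_domination_cycle_adjacent_pair (n : ℕ) (hn : 4 ≤ n) (hn8 : n ≠ 8) :
    ∃ S : Finset (Fin n), (SimpleGraph.cycleGraph n).IsHopDominatingSet S ∧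
      (∃ u ∈ S, ∃ v ∈ S, (SimpleGraph.cycleGraph n).Adj u v) ∧
      5 * S.card ≤ 2 * n + 2 := by
  obtain ⟨A, hA, hcard⟩ := exists_isHopPattern n hn hn8
  obtain ⟨m, rfl⟩ : ∃ m, n = m + 4 := ⟨n - 4, by omega⟩
  refine ⟨A.image Nat.cast, hA.isHopDominatingSet,
    ⟨1, Finset.mem_image_of_mem _ hA.one_mem, 0, Finset.mem_image_of_mem _ hA.zero_mem, ?_⟩,
    (Nat.mul_le_mul_left 5 Finset.card_image_le).trans hcard⟩
  simp [cycleGraph_adj]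
end

section
/- For every integer t ≥ 1, let G be the graph obtained from the star K_{1,t} by subdividing each edge with three vertices (so that each edge of the star becomes a path with 3 internal vertices, and G has 4t + 1 vertices). Then γ_h(G) = 2t; in particular γ_h(G) = (|V(G)| − 1)/2. -/
/-- The graph obtained from the star `K_{1,t}` by subdividing each edge with three vertices:
the center is `none`, and the `i`-th branch is the path
`none — (i,0) — (i,1) — (i,2) — (i,3)`, whose last vertex `(i,3)` is the `i`-th leaf. -/
def subdividedStar (t : ℕ) : SimpleGraph (Option (Fin t × Fin 4)) :=
  SimpleGraph.fromRel (fun p q =>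
    (p = none ∧ ∃ i : Fin t, q = some (i, 0)) ∨
    (∃ (i : Fin t) (j k : Fin 4), p = some (i, j) ∧ q = some (i, k) ∧ (j : ℕ) + 1 = (k : ℕ)))

/-! On the branch `none — (i,0) — (i,1) — (i,2) — (i,3)` the only vertex at distance 2 from the
leaf `(i,3)` is `(i,1)`, and the only one at distance 2 from `(i,2)` is `(i,0)`. So a hop
dominating set meets both pairs `{(i,1), (i,3)}` and `{(i,0), (i,2)}` of every branch and has at
least `2t` vertices. Conversely the `2t` vertices `(i,1)`, `(i,2)` hop dominate: `(i,2)` covers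
`(i,0)`, `(i,1)` covers `(i,3)`, and any `(i,1)` covers the centre. -/

namespace SimpleGraph

variable {V : Type*} {G : SimpleGraph V} {u v : V}

theorem dist_eq_two_iff :
    G.dist u v = 2 ↔ u ≠ v ∧ ¬G.Adj u v ∧ (G.commonNeighbors u v).Nonempty := by
  rw [dist, ENat.toNat_eq_iff two_ne_zero, Nat.cast_ofNat, edist_eq_two_iff]

theorem hopDominationNumber_eq [Fintype V] {S : Finset V} (hS : G.IsHopDominatingSet S)
    (hmin : ∀ T : Finset V, G.IsHopDominatingSet T → S.card ≤ T.card) :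
    G.hopDominationNumber = S.card :=
  le_antisymm (Nat.sInf_le ⟨S, hS, rfl⟩)
    (le_csInf ⟨_, S, hS, rfl⟩ fun _ ⟨T, hT, hk⟩ ↦ hk ▸ hmin T hT)

end SimpleGraph

open SimpleGraph

namespace subdividedStar

variable {t : ℕ} {i i' : Fin t} {j k : Fin 4} {u : Option (Fin t × Fin 4)}

@[simp]
theorem adj_none_some : (subdividedStar t).Adj none (some (i, j)) ↔ j = 0 := by
  simp [subdividedStar]

@[simp]
theorem adj_some_none : (subdividedStar t).Adj (some (i, j)) none ↔ j = 0 := by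
  rw [adj_comm, adj_none_some]

@[simp]
theorem adj_some_some :
    (subdividedStar t).Adj (some (i, j)) (some (i', k)) ↔
      i = i' ∧ ((j : ℕ) + 1 = k ∨ (k : ℕ) + 1 = j) := by
  simp only [subdividedStar, fromRel_adj, ne_eq, Option.some.injEq, Prod.mk.injEq]
  grind

theorem eq_of_adj_three (h : (subdividedStar t).Adj u (some (i, 3))) : u = some (i, 2) := by
  rcases u with _ | ⟨i', k⟩
  · simp at h
  · obtain ⟨rfl, h⟩ := adj_some_some.mp h
    fin_cases k <;> simp_all

theorem eq_of_adj_two (h : (subdividedStar t).Adj u (some (i, 2))) :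
    u = some (i, 1) ∨ u = some (i, 3) := by
  rcases u with _ | ⟨i', k⟩
  · simp at h
  · obtain ⟨rfl, h⟩ := adj_some_some.mp h
    fin_cases k <;> simp_all

theorem eq_of_adj_one (h : (subdividedStar t).Adj u (some (i, 1))) :
    u = some (i, 0) ∨ u = some (i, 2) := by
  rcases u with _ | ⟨i', k⟩
  · simp at h
  · obtain ⟨rfl, h⟩ := adj_some_some.mp h
    fin_cases k <;> simp_all

theorem eq_of_dist_three (h : (subdividedStar t).dist u (some (i, 3)) = 2) : u = some (i, 1) := by
  obtain ⟨hne, -, w, hw⟩ := dist_eq_two_iff.mp h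
  rw [mem_commonNeighbors] at hw
  obtain rfl := eq_of_adj_three hw.2.symm
  exact (eq_of_adj_two hw.1).resolve_right hne

theorem eq_of_dist_two (h : (subdividedStar t).dist u (some (i, 2)) = 2) : u = some (i, 0) := by
  obtain ⟨hne, -, w, hw⟩ := dist_eq_two_iff.mp h
  rw [mem_commonNeighbors] at hw
  rcases eq_of_adj_two hw.2.symm with rfl | rfl
  · exact (eq_of_adj_one hw.1).resolve_right hne
  · exact absurd (eq_of_adj_three hw.1) hne

variable {S : Finset (Option (Fin t × Fin 4))}

theorem mem_one_or_mem_three (hS : (subdividedStar t).IsHopDominatingSet S) (i : Fin t) :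
    some (i, 1) ∈ S ∨ some (i, 3) ∈ S :=
  or_iff_not_imp_right.mpr fun h ↦ by
    obtain ⟨u, hu, hd⟩ := hS _ h
    rwa [eq_of_dist_three hd] at hu

theorem mem_zero_or_mem_two (hS : (subdividedStar t).IsHopDominatingSet S) (i : Fin t) :
    some (i, 0) ∈ S ∨ some (i, 2) ∈ S :=
  or_iff_not_imp_right.mpr fun h ↦ by
    obtain ⟨u, hu, hd⟩ := hS _ h
    rwa [eq_of_dist_two hd] at hu

theorem two_mul_le_card (hS : (subdividedStar t).IsHopDominatingSet S) : 2 * t ≤ S.card := by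
  let pairs : Finset (Option (Fin t × Fin 2)) := Finset.univ.map .some
  -- `pairOf` identifies `(i, j)` with `(i, j + 2)`
  let pairOf : Option (Fin t × Fin 4) → Option (Fin t × Fin 2) :=
    Option.map (Prod.map id fun j ↦ Fin.ofNat 2 j)
  have hsurj : Set.SurjOn pairOf S pairs := by
    intro p hp
    obtain ⟨⟨i, b⟩, -, rfl⟩ := Finset.mem_map.mp hp
    fin_cases b
    · rcases mem_zero_or_mem_two hS i with h | h
      exacts [⟨_, h, rfl⟩, ⟨_, h, rfl⟩]
    · rcases mem_one_or_mem_three hS i with h | h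
      exacts [⟨_, h, rfl⟩, ⟨_, h, rfl⟩]
  calc 2 * t = pairs.card := by simp [pairs, mul_comm]
    _ ≤ S.card := Finset.card_le_card_of_surjOn pairOf hsurj

def middleVertices (t : ℕ) : Finset (Option (Fin t × Fin 4)) :=
  Finset.univ.map ⟨fun p : Fin t × Fin 2 ↦ some (p.1, ![1, 2] p.2),
    (Option.some_injective _).comp (Function.injective_id.prodMap (by decide))⟩

theorem card_middleVertices : (middleVertices t).card = 2 * t := by
  simp [middleVertices, mul_comm]

theorem some_one_mem_middleVertices (i : Fin t) : some (i, 1) ∈ middleVertices t :=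
  Finset.mem_map.mpr ⟨(i, 0), Finset.mem_univ _, rfl⟩

theorem some_two_mem_middleVertices (i : Fin t) : some (i, 2) ∈ middleVertices t :=
  Finset.mem_map.mpr ⟨(i, 1), Finset.mem_univ _, rfl⟩

theorem isHopDominatingSet_middleVertices (ht : 0 < t) :
    (subdividedStar t).IsHopDominatingSet (middleVertices t) := by
  rintro (_ | ⟨i, j⟩) hv
  · refine ⟨some (⟨0, ht⟩, 1), some_one_mem_middleVertices _, dist_eq_two_iff.mpr
      ⟨by simp, by simp, some (⟨0, ht⟩, 0), by simp [mem_commonNeighbors]⟩⟩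
  fin_cases j
  · refine ⟨some (i, 2), some_two_mem_middleVertices i, dist_eq_two_iff.mpr
      ⟨by simp, by simp, some (i, 1), by simp [mem_commonNeighbors]⟩⟩
  · exact absurd (some_one_mem_middleVertices i) hv
  · exact absurd (some_two_mem_middleVertices i) hv
  · refine ⟨some (i, 1), some_one_mem_middleVertices i, dist_eq_two_iff.mpr
      ⟨by simp, by simp, some (i, 2), by simp [mem_commonNeighbors]⟩⟩

end subdividedStar

theorem hop_domination_subdivided_star (t : ℕ) (ht : 1 ≤ t) :
    Fintype.card (Option (Fin t × Fin 4)) = 4 * t + 1 ∧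
    (subdividedStar t).hopDominationNumber = 2 * t ∧
    (subdividedStar t).hopDominationNumber =
      (Fintype.card (Option (Fin t × Fin 4)) - 1) / 2 := by
  have hcard : Fintype.card (Option (Fin t × Fin 4)) = 4 * t + 1 := by
    simp [mul_comm]
  have hγ : (subdividedStar t).hopDominationNumber = 2 * t := by
    rw [← subdividedStar.card_middleVertices,
      hopDominationNumber_eq (subdividedStar.isHopDominatingSet_middleVertices ht)]
    exact fun T hT ↦ subdividedStar.card_middleVertices ▸ subdividedStar.two_mul_le_card hT
  exact ⟨hcard, hγ, by omega⟩
end
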